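/- Let W be a d-dimensional Brownian motion and β ∈ M^d. Then almost surely liminf_{t↘0} (1/t)|W(t)ᵀ β W(t)| = 0. -/

import Mathlib

/-!
Sample `W` along the times `tₙ = exp (-n²)`. The coordinate increments `W tₙ - W tₙ₊₁` are
independent centred Gaussians of variance at most `tₙ`, so for each `b > 0` the events
`|W tₙ i - W tₙ₊₁ i| ≤ b √tₙ` (all `i`) have probability bounded below uniformly in `n`; by the
second Borel–Cantelli lemma they occur infinitely often. Since `tₙ₊₁ / tₙ = exp (-(2n+1))` is
summable, Chebyshev and the first Borel–Cantelli lemma give `|W tₙ₊₁ i| < b √tₙ` eventually.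
Hence `‖W tₙ‖² ≤ 4 d b² tₙ` infinitely often, and `|⟪W, β W⟫| ≤ ‖β‖ ‖W‖²`.
-/

open MeasureTheory ProbabilityTheory Filter Real
open scoped RealInnerProductSpace NNReal ENNReal Topology

noncomputable section

/-- One-dimensional standard Brownian motion: starts at zero, continuous paths, Gaussian
increments, independent increments. -/
def IsBM {Ω : Type*} [MeasureSpace Ω] (W : ℝ → Ω → ℝ) : Prop :=
  (∀ ω, W 0 ω = 0) ∧
  (∀ ω, Continuous fun t => W t ω) ∧
  (∀ t, Measurable (W t)) ∧
  (∀ s t : ℝ, 0 ≤ s → s ≤ t →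
    Measure.map (fun ω => W t ω - W s ω) ℙ = gaussianReal 0 ((t - s).toNNReal)) ∧
  (∀ (n : ℕ) (t : ℕ → ℝ), Monotone t → (∀ i, 0 ≤ t i) →
    iIndepFun
      (fun i : Fin n => fun ω => W (t (i + 1)) ω - W (t i) ω) ℙ)

/-- `d`-dimensional standard Brownian motion: independent coordinate Brownian motions. -/
def IsBMVec {Ω : Type*} [MeasureSpace Ω] (d : ℕ)
    (W : ℝ → Ω → EuclideanSpace ℝ (Fin d)) : Prop :=
  (∀ i : Fin d, IsBM fun t ω => W t ω i) ∧
  iIndepFun (fun (i : Fin d) (ω : Ω) => fun t : ℝ => W t ω i) ℙ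

/-- Apply a `d×d` matrix to a Euclidean vector. -/
def eApply {d : ℕ} (β : Matrix (Fin d) (Fin d) ℝ) (y : EuclideanSpace ℝ (Fin d)) :
    EuclideanSpace ℝ (Fin d) :=
  (WithLp.equiv 2 (Fin d → ℝ)).symm (β.mulVec ((WithLp.equiv 2 (Fin d → ℝ)) y))

/-- Operator norm `|β| = sup_{|y|=1} |βy|` of a `d×d` matrix. -/
def opNorm {d : ℕ} (β : Matrix (Fin d) (Fin d) ℝ) : ℝ :=
  ‖Matrix.toEuclideanCLM (𝕜 := ℝ) β‖

/-- Largest eigenvalue `λ*(β) = max_{|y|=1} yᵀ β y` of a symmetric matrix. -/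
def lamStar {d : ℕ} (β : Matrix (Fin d) (Fin d) ℝ) : ℝ :=
  ⨆ y : Metric.sphere (0 : EuclideanSpace ℝ (Fin d)) 1,
    ⟪(y : EuclideanSpace ℝ (Fin d)), eApply β y⟫

/-- The function `h(t) = 2t log log (1/t)`. -/
def hll (t : ℝ) : ℝ := 2 * t * Real.log (Real.log (1 / t))

open Metric

lemma gaussianReal_closedBall_pos (μ : ℝ) {v : ℝ≥0} (hv : v ≠ 0) (x : ℝ) {r : ℝ} (hr : 0 < r) :
    0 < gaussianReal μ v (closedBall x r) := by
  refine pos_iff_ne_zero.2 fun h => ?_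
  have := gaussianReal_absolutelyContinuous' μ hv h
  rw [Real.volume_closedBall, ENNReal.ofReal_eq_zero] at this
  linarith

lemma gaussianReal_closedBall_le_closedBall_mul_sqrt (v : ℝ≥0) (b : ℝ) :
    gaussianReal 0 1 (closedBall 0 b) ≤ gaussianReal 0 v (closedBall 0 (b * √v)) := by
  have hmap : (gaussianReal 0 1).map (√v * ·) = gaussianReal 0 v := by
    rw [gaussianReal_map_const_mul, mul_zero, mul_one]
    exact congrArg _ (NNReal.eq (Real.sq_sqrt v.coe_nonneg))
  rw [← hmap, Measure.map_apply (measurable_const_mul _) measurableSet_closedBall]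
  refine measure_mono fun x hx => ?_
  simp only [Set.mem_preimage, mem_closedBall_zero_iff, Real.norm_eq_abs, abs_mul,
    abs_of_nonneg (Real.sqrt_nonneg _)] at hx ⊢
  rw [mul_comm b]
  exact mul_le_mul_of_nonneg_left hx (Real.sqrt_nonneg _)

lemma gaussianReal_abs_ge_le (v : ℝ≥0) {c : ℝ} (hc : 0 < c) :
    gaussianReal 0 v {x | c ≤ |x|} ≤ ENNReal.ofReal (v / c ^ 2) := by
  simpa [integral_id_gaussianReal, variance_id_gaussianReal] using
    meas_ge_le_variance_div_sq (μ := gaussianReal 0 v) (X := id) (memLp_id_gaussianReal 2) hc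

lemma EuclideanSpace.norm_sq_le_of_forall_abs_le {ι : Type*} [Fintype ι]
    {y : EuclideanSpace ℝ ι} {r : ℝ} (h : ∀ i, |y i| ≤ r) :
    ‖y‖ ^ 2 ≤ Fintype.card ι * r ^ 2 := by
  rw [EuclideanSpace.norm_sq_eq, ← nsmul_eq_mul, ← Finset.card_univ, ← Finset.sum_const]
  exact Finset.sum_le_sum fun i _ => by
    simpa only [Real.norm_eq_abs, sq_abs] using pow_le_pow_left₀ (abs_nonneg _) (h i) 2

lemma abs_inner_eApply_le {d : ℕ} (β : Matrix (Fin d) (Fin d) ℝ) (y : EuclideanSpace ℝ (Fin d)) :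
    |⟪y, eApply β y⟫| ≤ opNorm β * ‖y‖ ^ 2 := by
  have hβ : eApply β y = Matrix.toEuclideanCLM (𝕜 := ℝ) β y := rfl
  calc |⟪y, eApply β y⟫| ≤ ‖y‖ * ‖eApply β y‖ := abs_real_inner_le_norm _ _
    _ ≤ ‖y‖ * (opNorm β * ‖y‖) := by
      rw [hβ]
      exact mul_le_mul_of_nonneg_left ((Matrix.toEuclideanCLM (𝕜 := ℝ) β).le_opNorm y)
        (norm_nonneg y)
    _ = opNorm β * ‖y‖ ^ 2 := by ring

lemma Filter.liminf_eq_zero_of_frequently_le {α : Type*} {l : Filter α} {f : α → ℝ}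
    (h0 : ∀ᶠ x in l, 0 ≤ f x) (h : ∀ ε > 0, ∃ᶠ x in l, f x ≤ ε) : liminf f l = 0 := by
  refine le_antisymm (le_of_forall_pos_le_add fun ε hε => ?_)
    (le_liminf_of_le (IsCoboundedUnder.of_frequently_le (h 1 one_pos)) h0)
  rw [zero_add]
  exact liminf_le_of_frequently_le (h ε hε) ⟨0, h0⟩

namespace IsBM

variable {Ω : Type*} [MeasureSpace Ω] {W : ℝ → Ω → ℝ}

lemma measure_sub_mem (hW : IsBM W) {s t : ℝ} (hs : 0 ≤ s) (hst : s ≤ t) {A : Set ℝ}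
    (hA : MeasurableSet A) :
    ℙ {ω | W t ω - W s ω ∈ A} = gaussianReal 0 (t - s).toNNReal A := by
  rw [← hW.2.2.2.1 s t hs hst,
    Measure.map_apply (f := fun ω => W t ω - W s ω) ((hW.2.2.1 t).sub (hW.2.2.1 s)) hA]
  rfl

lemma iIndepFun_sub_of_antitone (hW : IsBM W) {t : ℕ → ℝ} (ht : Antitone t)
    (ht0 : ∀ n, 0 ≤ t n) : iIndepFun (fun n ω => W (t n) ω - W (t (n + 1)) ω) ℙ := by
  rw [iIndepFun_iff_finset]
  intro S
  obtain ⟨N, hSN⟩ := S.exists_nat_subset_range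
  -- `IsBM` speaks of increasing times: run `t` backwards from `N`.
  have hrev := (hW.2.2.2.2 N (fun m => t (N - m)) (ht.comp fun _ _ h => by omega)
    fun _ => ht0 _).precomp Fin.rev_injective
  have hfin : iIndepFun (fun (n : Fin N) ω => W (t n) ω - W (t (n + 1)) ω) ℙ := by
    convert hrev using 3 with n
    simp only [Fin.val_rev]
    congr 3 <;> omega
  exact hfin.precomp (g := fun n : S => ⟨n, Finset.mem_range.1 (hSN n.2)⟩)
    fun _ _ h => Subtype.ext (congrArg Fin.val h)

lemma ae_eventually_abs_lt (hW : IsBM W) {t r : ℕ → ℝ} (ht0 : ∀ n, 0 ≤ t n)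
    (hr : ∀ n, 0 < r n) (hsum : Summable fun n => t n / r n ^ 2) :
    ∀ᵐ ω, ∀ᶠ n in atTop, |W (t n) ω| < r n := by
  have hbad : ∀ n, ℙ {ω | r n ≤ |W (t n) ω|} ≤ ENNReal.ofReal (t n / r n ^ 2) := fun n => by
    have h := hW.measure_sub_mem le_rfl (ht0 n)
      (measurableSet_le measurable_const measurable_id.abs : MeasurableSet {x : ℝ | r n ≤ |x|})
    simp only [hW.1, sub_zero, Set.mem_ofPred_eq] at h
    rw [h]
    simpa [Real.coe_toNNReal _ (ht0 n)] using gaussianReal_abs_ge_le (t n).toNNReal (hr n)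
  have hfin : ∑' n, ℙ {ω | r n ≤ |W (t n) ω|} ≠ ∞ := by
    refine ne_top_of_le_ne_top ?_ (ENNReal.tsum_le_tsum hbad)
    rw [← ENNReal.ofReal_tsum_of_nonneg (fun n => div_nonneg (ht0 n) (sq_nonneg _)) hsum]
    exact ENNReal.ofReal_ne_top
  filter_upwards [ae_eventually_notMem hfin] with ω hω
  simpa using hω

end IsBM

namespace IsBMVec

variable {Ω : Type*} [MeasureSpace Ω] {d : ℕ} {W : ℝ → Ω → EuclideanSpace ℝ (Fin d)}
  {t : ℕ → ℝ}

lemma iIndepFun_sub_of_antitone (hW : IsBMVec d W) (ht : Antitone t) (ht0 : ∀ n, 0 ≤ t n) :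
    iIndepFun (fun (p : Fin d × ℕ) ω => W (t p.2) ω p.1 - W (t (p.2 + 1)) ω p.1) ℙ := by
  refine iIndepFun_uncurry' (fun i n => ((hW.1 i).2.2.1 _).sub ((hW.1 i).2.2.1 _)) ?_
    fun i => (hW.1 i).iIndepFun_sub_of_antitone (t := t) ht ht0
  exact hW.2.comp (fun _ x n => x (t n) - x (t (n + 1)))
    fun _ => measurable_pi_lambda _ fun n => (measurable_pi_apply _).sub (measurable_pi_apply _)

lemma measure_biInter_sub_mem (hW : IsBMVec d W) (ht : Antitone t) (ht0 : ∀ n, 0 ≤ t n)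
    {A : ℕ → Set ℝ} (hA : ∀ n, MeasurableSet (A n)) (S : Finset ℕ) :
    ℙ (⋂ n ∈ S, {ω | ∀ i, W (t n) ω i - W (t (n + 1)) ω i ∈ A n}) =
      ∏ n ∈ S, ∏ i, ℙ {ω | W (t n) ω i - W (t (n + 1)) ω i ∈ A n} := by
  convert (hW.iIndepFun_sub_of_antitone ht ht0).measure_inter_preimage_eq_mul
    (Finset.univ ×ˢ S) (sets := fun p => A p.2) fun _ _ => hA _ using 1
  · congr 1
    ext ω
    simp only [Set.mem_iInter, Set.mem_ofPred_eq, Set.mem_preimage, Finset.mem_product,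
      Finset.mem_univ, true_and]
    exact ⟨fun h p hp => h p.2 hp p.1, fun h n hn i => h (i, n) hn⟩
  · rw [Finset.prod_product_right]
    rfl

lemma measurableSet_setOf_forall_sub_mem (hW : IsBMVec d W) {A : Set ℝ} (hA : MeasurableSet A)
    (s u : ℝ) : MeasurableSet {ω | ∀ i, W s ω i - W u ω i ∈ A} := by
  simp only [Set.ofPred_forall]
  exact MeasurableSet.iInter fun i => hA.preimage (((hW.1 i).2.2.1 _).sub ((hW.1 i).2.2.1 _))

lemma iIndepSet_sub_mem (hW : IsBMVec d W) (ht : Antitone t) (ht0 : ∀ n, 0 ≤ t n)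
    {A : ℕ → Set ℝ} (hA : ∀ n, MeasurableSet (A n)) :
    iIndepSet (fun n => {ω | ∀ i, W (t n) ω i - W (t (n + 1)) ω i ∈ A n}) ℙ := by
  refine (iIndepSet_iff_meas_biInter fun n =>
    hW.measurableSet_setOf_forall_sub_mem (hA n) _ _).2 fun S => ?_
  rw [hW.measure_biInter_sub_mem ht ht0 hA S]
  exact Finset.prod_congr rfl fun n _ => by
    simpa using (hW.measure_biInter_sub_mem ht ht0 hA {n}).symm

lemma ae_frequently_abs_sub_le (hW : IsBMVec d W) (ht : Antitone t) (ht0 : ∀ n, 0 ≤ t n)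
    {b : ℝ} (hb : 0 < b) :
    ∀ᵐ ω, ∃ᶠ n in atTop, ∀ i, |W (t n) ω i - W (t (n + 1)) ω i| ≤ b * √(t n - t (n + 1)) := by
  set A : ℕ → Set ℝ := fun n => closedBall 0 (b * √(t n - t (n + 1)))
  have hA : ∀ n, MeasurableSet (A n) := fun n => measurableSet_closedBall
  set B : ℕ → Set Ω := fun n => {ω | ∀ i, W (t n) ω i - W (t (n + 1)) ω i ∈ A n}
  have hBind : iIndepSet B ℙ := hW.iIndepSet_sub_mem ht ht0 hA
  have hBlow : ∀ n, gaussianReal 0 1 (closedBall 0 b) ^ d ≤ ℙ (B n) := fun n => by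
    have hBn := hW.measure_biInter_sub_mem ht ht0 hA {n}
    simp only [Finset.mem_singleton, Set.iInter_iInter_eq_left, Finset.prod_singleton] at hBn
    rw [hBn]
    refine (Finset.pow_card_le_prod Finset.univ _ (gaussianReal 0 1 (closedBall 0 b))
      fun i _ => ?_).trans_eq' (by simp)
    have htn : 0 ≤ t n - t (n + 1) := sub_nonneg.2 (ht n.le_succ)
    rw [(hW.1 i).measure_sub_mem (ht0 _) (ht n.le_succ) (hA n)]
    simpa [A, Real.coe_toNNReal _ htn] using
      gaussianReal_closedBall_le_closedBall_mul_sqrt (t n - t (n + 1)).toNNReal b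
  have hBsum : ∑' n, ℙ (B n) = ∞ := by
    have hc := (gaussianReal_closedBall_pos 0 one_ne_zero 0 hb).ne'
    exact top_unique <| (ENNReal.tsum_const_eq_top_of_ne_zero (pow_ne_zero d hc)).ge.trans
      (ENNReal.tsum_le_tsum hBlow)
  have := hBind.isProbabilityMeasure
  have hBmeas : ∀ n, MeasurableSet (B n) := fun n =>
    hW.measurableSet_setOf_forall_sub_mem (hA n) _ _
  have hlimsup : ∀ᵐ ω, ω ∈ limsup B atTop :=
    (mem_ae_iff_prob_eq_one (.measurableSet_limsup hBmeas)).2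
      (measure_limsup_eq_one hBmeas hBind hBsum)
  filter_upwards [hlimsup] with ω hω
  simpa [B, A] using mem_limsup_iff_frequently_mem.1 hω

lemma ae_eventually_abs_lt (hW : IsBMVec d W) {r : ℕ → ℝ} (ht0 : ∀ n, 0 ≤ t n)
    (hr : ∀ n, 0 < r n) (hsum : Summable fun n => t n / r n ^ 2) :
    ∀ᵐ ω, ∀ᶠ n in atTop, ∀ i, |W (t n) ω i| < r n := by
  filter_upwards [ae_all_iff.2 fun i => (hW.1 i).ae_eventually_abs_lt ht0 hr hsum] with ω hω
  exact eventually_all.2 hω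

lemma ae_frequently_sq_norm_le (hW : IsBMVec d W) (ht : Antitone t) (ht0 : ∀ n, 0 < t n)
    (hsum : Summable fun n => t (n + 1) / t n) {ε : ℝ} (hε : 0 < ε) :
    ∀ᵐ ω, ∃ᶠ n in atTop, ‖W (t n) ω‖ ^ 2 ≤ ε * t n := by
  set b := √(ε / (4 * (d + 1)))
  have hb : 0 < b := Real.sqrt_pos.2 (by positivity)
  have hb2 : b ^ 2 = ε / (4 * (d + 1)) := Real.sq_sqrt (by positivity)
  have hsum' : Summable fun n => t (n + 1) / (b * √(t n)) ^ 2 := by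
    refine (hsum.div_const (b ^ 2)).congr fun n => ?_
    rw [mul_pow, Real.sq_sqrt (ht0 n).le, div_div, mul_comm (t n)]
  filter_upwards [hW.ae_frequently_abs_sub_le ht (fun n => (ht0 n).le) hb,
    hW.ae_eventually_abs_lt (fun n => (ht0 (n + 1)).le) (fun n => by have := ht0 n; positivity)
      hsum'] with ω hinc hnext
  refine (hinc.and_eventually hnext).mono fun n ⟨hinc, hnext⟩ => ?_
  have hcoord : ∀ i, |W (t n) ω i| ≤ 2 * b * √(t n) := fun i => by
    have hsqrt : √(t n - t (n + 1)) ≤ √(t n) := Real.sqrt_le_sqrt (by linarith [ht0 (n + 1)])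
    have := abs_sub_abs_le_abs_sub (W (t n) ω i) (W (t (n + 1)) ω i)
    nlinarith [hinc i, hnext i, mul_le_mul_of_nonneg_left hsqrt hb.le]
  calc ‖W (t n) ω‖ ^ 2 ≤ d * (2 * b * √(t n)) ^ 2 := by
        simpa using EuclideanSpace.norm_sq_le_of_forall_abs_le hcoord
    _ = d / (d + 1) * (ε * t n) := by
        rw [mul_pow, mul_pow, hb2, Real.sq_sqrt (ht0 n).le]
        field_simp
        ring
    _ ≤ ε * t n := mul_le_of_le_one_left (mul_pos hε (ht0 n)).le
        (div_le_one_of_le₀ (by linarith) (by positivity))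

lemma ae_forall_frequently_sq_norm_le (hW : IsBMVec d W) :
    ∀ᵐ ω, ∀ ε > 0, ∃ᶠ s in 𝓝[>] 0, ‖W s ω‖ ^ 2 ≤ ε * s := by
  set t : ℕ → ℝ := fun n => rexp (-(n : ℝ) ^ 2)
  have ht : Antitone t := fun m n h => Real.exp_le_exp.2 (by gcongr)
  have hsum : Summable fun n => t (n + 1) / t n := by
    refine Real.summable_exp_neg_nat.of_nonneg_of_le (fun n => by positivity) fun n => ?_
    rw [← Real.exp_sub]
    exact Real.exp_le_exp.2 (by push_cast; nlinarith)
  have hlim : Tendsto t atTop (𝓝[>] 0) := tendsto_nhdsWithin_iff.2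
    ⟨Real.tendsto_exp_atBot.comp <| tendsto_neg_atTop_atBot.comp <|
      (tendsto_pow_atTop two_ne_zero).comp tendsto_natCast_atTop_atTop,
      Eventually.of_forall fun n => Real.exp_pos _⟩
  filter_upwards [ae_all_iff.2 fun k : ℕ =>
    hW.ae_frequently_sq_norm_le ht (fun n => Real.exp_pos _) hsum (ε := 1 / (k + 1))
      (by positivity)] with ω hω ε hε
  obtain ⟨k, hk⟩ := exists_nat_one_div_lt hε
  exact hlim.frequently ((hω k).mono fun n hn =>
    hn.trans (mul_le_mul_of_nonneg_right hk.le (Real.exp_pos _).le))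

end IsBMVec

theorem liminf_quadratic_form_brownian_general
    {Ω : Type*} [MeasureSpace Ω] {d : ℕ}
    (W : ℝ → Ω → EuclideanSpace ℝ (Fin d)) (hW : IsBMVec d W)
    (β : Matrix (Fin d) (Fin d) ℝ) :
    ∀ᵐ ω ∂ℙ, Filter.liminf (fun t => |⟪W t ω, eApply β (W t ω)⟫| / t) (𝓝[>] 0) = 0 := by
  filter_upwards [hW.ae_forall_frequently_sq_norm_le] with ω hω
  have hC : 0 < opNorm β + 1 := add_pos_of_nonneg_of_pos (norm_nonneg _) one_pos
  refine liminf_eq_zero_of_frequently_le ?_ fun ε hε => ?_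
  · filter_upwards [self_mem_nhdsWithin] with s hs
    exact div_nonneg (abs_nonneg _) (le_of_lt hs)
  · refine ((hω (ε / (opNorm β + 1)) (div_pos hε hC)).and_eventually self_mem_nhdsWithin).mono
      fun s ⟨hs, hs0⟩ => ?_
    rw [div_le_iff₀ hs0]
    calc |⟪W s ω, eApply β (W s ω)⟫| ≤ opNorm β * ‖W s ω‖ ^ 2 := abs_inner_eApply_le β _
      _ ≤ (opNorm β + 1) * (ε / (opNorm β + 1) * s) := by gcongr; linarith
      _ = ε * s := by field_simp

/-- Lemma 3.5: for a `d`-dimensional Brownian motion `W` and any `β ∈ M^d`, almost surely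
`liminf_{t↘0} (1/t)|W(t)ᵀ β W(t)| = 0`. -/
theorem liminf_quadratic_form_brownian
    {Ω : Type*} [MeasureSpace Ω] [IsProbabilityMeasure (ℙ : Measure Ω)] {d : ℕ}
    (W : ℝ → Ω → EuclideanSpace ℝ (Fin d)) (hW : IsBMVec d W)
    (β : Matrix (Fin d) (Fin d) ℝ) :
    ∀ᵐ ω ∂ℙ, Filter.liminf (fun t => |⟪W t ω, eApply β (W t ω)⟫| / t) (𝓝[>] 0) = 0 :=
  liminf_quadratic_form_brownian_general W hW β

end
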